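/- arXiv:1812.00274 — 2 statements merged into one kernel-verified Lean document; each statement's English description precedes it below -/
import Mathlib

section
/- Let n ∈ ℕ and let V ⊆ ℝ^n be a nonempty compact set. For every r ∈ ℕ, Q_r^V ⊆ Q_{r+1}^V. -/
noncomputable section

open Filter Topology

/-- The `r`-stack of a `d`-tensor `T`: `Stk^r(T)(u, w) = T(u)`. -/
def stk {α : Type*} (d r : ℕ) (T : (Fin d → α) → ℝ) : (Fin (d + r) → α) → ℝ :=
  fun v => T fun i => v (Fin.castAdd r i)

/-- The symmetrization of a `d`-tensor:
`σ(T)(v) = (1/d!) ∑_{π ∈ Sym(d)} T(v ∘ π)`. -/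
def tsym {α : Type*} (d : ℕ) (T : (Fin d → α) → ℝ) : (Fin d → α) → ℝ :=
  fun v => (d.factorial : ℝ)⁻¹ * ∑ π : Equiv.Perm (Fin d), T (v ∘ π)

/-- A symmetric two-variable function identified with a `2`-tensor. -/
def kerTensor {X : Type*} (K : X → X → ℝ) : (Fin 2 → X) → ℝ :=
  fun v => K (v 0) (v 1)

/-- A kernel: a continuous symmetric real-valued function of two variables. -/
def IsKernel {X : Type*} [TopologicalSpace X] (K : X → X → ℝ) : Prop :=
  Continuous (fun p : X × X => K p.1 p.2) ∧ ∀ x y, K x y = K y x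

/-- Positive semidefiniteness of a two-variable function. -/
def IsPSDKernel {X : Type*} (K : X → X → ℝ) : Prop :=
  ∀ (k : ℕ) (v : Fin k → X) (x : Fin k → ℝ),
    0 ≤ ∑ i, ∑ j, K (v i) (v j) * x i * x j

/-- Copositivity of a two-variable function. -/
def IsCopositiveKernel {X : Type*} (K : X → X → ℝ) : Prop :=
  ∀ (k : ℕ) (v : Fin k → X) (x : Fin k → ℝ), (∀ i, 0 ≤ x i) →
    0 ≤ ∑ i, ∑ j, K (v i) (v j) * x i * x j

/-- An `(r+2)`-tensor `S` is 2-PSD if it is continuous and every slice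
`(x, y) ↦ S(x, y, z)` is a PSD kernel. -/
def Is2PSD {X : Type*} [TopologicalSpace X] (r : ℕ)
    (S : (Fin (2 + r) → X) → ℝ) : Prop :=
  Continuous S ∧ ∀ z : Fin r → X, IsPSDKernel fun x y => S (Fin.append ![x, y] z)

/-- The tensor condition defining `C_r`: `σ(Stk^r M) = σ(N)` for some
nonnegative `(r+2)`-tensor `N`. -/
def CrCond {X : Type*} (r : ℕ) (M : X → X → ℝ) : Prop :=
  ∃ N : (Fin (2 + r) → X) → ℝ, (∀ v, 0 ≤ N v) ∧
    tsym (2 + r) (stk 2 r (kerTensor M)) = tsym (2 + r) N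

/-- Membership in `C_r`: a kernel satisfying the `C_r` tensor condition. -/
def memCr {X : Type*} [TopologicalSpace X] (r : ℕ) (M : X → X → ℝ) : Prop :=
  IsKernel M ∧ CrCond r M

/-- Membership in `Q_r`: a kernel `M` with `σ(Stk^r M) = σ(N) + σ(S)` for some
nonnegative `(r+2)`-tensor `N` and 2-PSD `(r+2)`-tensor `S`. -/
def memQr {X : Type*} [TopologicalSpace X] (r : ℕ) (M : X → X → ℝ) : Prop :=
  IsKernel M ∧ ∃ N S : (Fin (2 + r) → X) → ℝ, (∀ v, 0 ≤ N v) ∧ Is2PSD r S ∧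
    tsym (2 + r) (stk 2 r (kerTensor M)) =
      fun v => tsym (2 + r) N v + tsym (2 + r) S v

/-- The space of kernels on `V`, i.e. symmetric continuous functions on
`V × V`, with the topology of `C(V × V, ℝ)` (for `V` compact this is the
supremum-norm topology). -/
def KernelSpace {n : ℕ} (V : Set (Fin n → ℝ)) : Type _ :=
  {K : C(↥V × ↥V, ℝ) // ∀ x y, K (x, y) = K (y, x)}

instance {n : ℕ} (V : Set (Fin n → ℝ)) : TopologicalSpace (KernelSpace V) :=
  instTopologicalSpaceSubtype

/-- `COP(V)` as a subset of the space of kernels on `V`. -/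
def COPSet {n : ℕ} (V : Set (Fin n → ℝ)) : Set (KernelSpace V) :=
  {K | IsCopositiveKernel fun x y => K.1 (x, y)}

/-!
Adding one more dummy variable to a certificate for `Q_r` gives one for `Q_{r+1}`: stack `N` and
`S` once more. Stacking keeps `N` nonnegative, and every slice of the stacked `S` is a slice of `S`.
The identity `σ(Stk(σ T)) = σ(Stk T)` holds because a permutation of the first `d` slots extends to
one of all `d + r` slots, so symmetrizing over the first `d` slots is absorbed by the full
symmetrization; applied to both sides of `σ(Stk^r M) = σ(N) + σ(S)` it gives
`σ(Stk^{r+1} M) = σ(Stk N) + σ(Stk S)`.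
-/

section Tensor

variable {X : Type*}

lemma tsym_add (d : ℕ) (A B : (Fin d → X) → ℝ) :
    tsym d (fun v => A v + B v) = fun v => tsym d A v + tsym d B v := by
  funext v
  simp only [tsym, Finset.sum_add_distrib, mul_add]

lemma tsym_stk_tsym (d r : ℕ) (A : (Fin d → X) → ℝ) :
    tsym (d + r) (stk d r (tsym d A)) = tsym (d + r) (stk d r A) := by
  funext v
  have reindex : ∀ τ : Equiv.Perm (Fin d),
      ∑ π : Equiv.Perm (Fin (d + r)), A (fun i => v (π (Fin.castAdd r (τ i)))) =
        ∑ π : Equiv.Perm (Fin (d + r)), A (fun i => v (π (Fin.castAdd r i))) := fun τ =>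
    Fintype.sum_equiv (Equiv.mulRight (τ.viaFintypeEmbedding (Fin.castAddEmb r))) _ _ fun π => by
      simp only [Equiv.coe_mulRight, Equiv.Perm.mul_apply, ← Fin.castAddEmb_apply,
        Equiv.Perm.viaFintypeEmbedding_apply_image]
  simp only [tsym, stk, Function.comp_def]
  rw [← Finset.mul_sum, Finset.sum_comm]
  simp only [reindex, Finset.sum_const, Finset.card_univ, Fintype.card_perm, Fintype.card_fin,
    nsmul_eq_mul]
  field_simp

lemma stk_one_append {m k : ℕ} (T : (Fin (m + k) → X) → ℝ) (u : Fin m → X) (z : Fin (k + 1) → X) :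
    stk (m + k) 1 T (Fin.append u z : Fin (m + (k + 1)) → X) = T (Fin.append u (Fin.init z)) := by
  simp only [stk]
  congr 1
  funext i
  refine Fin.addCases (fun j => ?_) (fun j => ?_) i
  · rw [Fin.append_left]
    exact Fin.append_left u z j
  · rw [Fin.append_right]
    exact Fin.append_right u z (Fin.castSucc j)

end Tensor

theorem Is2PSD.stk_one {X : Type*} [TopologicalSpace X] {r : ℕ} {S : (Fin (2 + r) → X) → ℝ}
    (hS : Is2PSD r S) : Is2PSD (r + 1) (stk (2 + r) 1 S) :=
  ⟨hS.1.comp (by fun_prop), fun z k v x => by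
    simpa only [stk_one_append] using hS.2 (Fin.init z) k v x⟩

theorem memQr.succ {X : Type*} [TopologicalSpace X] {r : ℕ} {M : X → X → ℝ}
    (hM : memQr r M) : memQr (r + 1) M := by
  obtain ⟨hK, N, S, hN, hS, hEq⟩ := hM
  refine ⟨hK, stk (2 + r) 1 N, stk (2 + r) 1 S, fun v => hN _, hS.stk_one, ?_⟩
  calc tsym (2 + r + 1) (stk (2 + r) 1 (stk 2 r (kerTensor M)))
      = tsym (2 + r + 1) (stk (2 + r) 1 (tsym (2 + r) (stk 2 r (kerTensor M)))) :=
        (tsym_stk_tsym _ _ _).symm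
    _ = tsym (2 + r + 1) (stk (2 + r) 1 fun v => tsym (2 + r) N v + tsym (2 + r) S v) := by
        rw [hEq]
    _ = fun v => tsym (2 + r + 1) (stk (2 + r) 1 (tsym (2 + r) N)) v +
          tsym (2 + r + 1) (stk (2 + r) 1 (tsym (2 + r) S)) v := tsym_add _ _ _
    _ = fun v => tsym (2 + r + 1) (stk (2 + r) 1 N) v + tsym (2 + r + 1) (stk (2 + r) 1 S) v := by
        rw [tsym_stk_tsym, tsym_stk_tsym]

theorem stmt4_general (n : ℕ) (V : Set (Fin n → ℝ)) (r : ℕ) (M : ↥V → ↥V → ℝ) (hM : memQr r M) :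
    memQr (r + 1) M :=
  hM.succ

/-- `Q_r^V ⊆ Q_{r+1}^V`. -/
theorem stmt4 (n : ℕ) (V : Set (Fin n → ℝ)) (hVne : V.Nonempty)
    (hVc : IsCompact V) (r : ℕ) (M : ↥V → ↥V → ℝ) (hM : memQr r M) :
    memQr (r + 1) M :=
  stmt4_general n V r M hM
end
end

section
/- Let G = (V, E) be a compact topological packing graph with V ⊆ ℝ^n compact. Suppose there exist λ⁺ ∈ ℝ and a kernel K⁺ ∈ int COP(V) with K⁺(v,v) = λ⁺ − 1 for all v ∈ V and K⁺(u,v) = −1 for all (u,v) ∉ E. Then the sequence (γ_r(G))_{r ∈ ℕ} is nonincreasing and converges to the stability number α(G) as r → ∞. -/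
noncomputable section

open Filter Topology

/-- The stability number: maximum cardinality of a finite stable set. -/
def stabilityNumber {n : ℕ} (V : Set (Fin n → ℝ)) (E : Set (↥V × ↥V)) : ℕ :=
  sSup {k : ℕ | ∃ S : Finset ↥V,
    (∀ u ∈ S, ∀ v ∈ S, u ≠ v → (u, v) ∉ E) ∧ S.card = k}

/-- `γ_r(G) ∈ ℝ ∪ {+∞}`: the infimum of `λ ∈ ℝ` over pairs `(K, λ)` with
`K ∈ C_r^V`, `K(v,v) = λ - 1` on the diagonal and `K(u,v) = -1` on non-edges. -/
def gammaVal {n : ℕ} (V : Set (Fin n → ℝ)) (E : Set (↥V × ↥V)) (r : ℕ) : EReal :=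
  sInf {x : EReal | ∃ l : ℝ, x = (l : EReal) ∧ ∃ K : ↥V → ↥V → ℝ,
    memCr r K ∧ (∀ v, K v v = l - 1) ∧ ∀ u v : ↥V, (u, v) ∉ E → K u v = -1}

/-- `ν_r(G) ∈ ℝ ∪ {+∞}`: as `γ_r(G)` but with `Q_r^V` in place of `C_r^V`. -/
def nuVal {n : ℕ} (V : Set (Fin n → ℝ)) (E : Set (↥V × ↥V)) (r : ℕ) : EReal :=
  sInf {x : EReal | ∃ l : ℝ, x = (l : EReal) ∧ ∃ K : ↥V → ↥V → ℝ,
    memQr r K ∧ (∀ v, K v v = l - 1) ∧ ∀ u v : ↥V, (u, v) ∉ E → K u v = -1}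


/-!
Write `offDiagSum K v = ∑_{i ≠ j} K (v i) (v j)`. Averaging over permutations shows that
`K ∈ C_r` iff `offDiagSum K v ≥ 0` for all `(r + 2)`-tuples `v`, and deleting one entry of an
`(m + 1)`-tuple in all possible ways shows that this condition passes from `m` to `m + 1`; hence
`C_r ⊆ C_{r+1}` and `γ_r` is nonincreasing. Applied to a maximum stable set with every point
repeated `r + 2` times, the condition forces `λ ≥ α(G)` for every feasible pair, so
`γ_r ≥ α(G)`.

For the upper bound, copositivity of `K⁺` forces `(v, v) ∈ E`, and with the packing property
this makes `E` open. By compactness there is a scale `ρ` such that on a finite `ρ`-net of `V`,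
with two centres joined when no non-edge lies within `ρ` of them, stable sets still have at most
`α(G)` points. The Motzkin–Straus inequality makes `α (I + A) - J` copositive for the adjacency
matrix `A` of this net graph; pulled back along a partition of unity subordinate to the net it
gives a continuous copositive kernel `K*` with diagonal `α - 1` and value `-1` on non-edges. As
`K⁺` is interior, `K⁺ - δ` is copositive for some `δ > 0`, so `(1 - t) K* + t K⁺` is feasible for
`λ = (1 - t) α + t λ⁺` with copositivity margin `t δ`, and a kernel with margin `t δ` lies in
`C_r` as soon as `(r + 2) t δ ≥ λ - 1`.
-/

section OffDiagonalSums

open Finset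

variable {X : Type*}

def offDiagSum {m : ℕ} (K : X → X → ℝ) (v : Fin m → X) : ℝ :=
  ∑ i, ∑ j, K (v i) (v j) - ∑ i, K (v i) (v i)

lemma sum_offDiag_eq_sum_sub_sum_diag {ι : Type*} [Fintype ι] [DecidableEq ι]
    (f : ι → ι → ℝ) :
    ∑ p ∈ (univ : Finset ι).offDiag, f p.1 p.2 = ∑ i, ∑ j, f i j - ∑ i, f i i := by
  rw [eq_sub_iff_add_eq, ← sum_diag (f := fun p => f p.1 p.2), ← sum_union
    (disjoint_diag_offDiag _).symm, union_comm, diag_union_offDiag, sum_product]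

/- Every pair of distinct points is `(π a, π b)` for equally many permutations `π`, and the
off-diagonal sum is invariant under relabelling. -/
lemma sum_perm_apply_apply {ι : Type*} [Fintype ι] [DecidableEq ι] {a b : ι} (hab : a ≠ b)
    (f : ι → ι → ℝ) :
    #(univ : Finset ι).offDiag * ∑ π : Equiv.Perm ι, f (π a) (π b) =
      (Fintype.card ι).factorial * ∑ p ∈ (univ : Finset ι).offDiag, f p.1 p.2 := by
  have hconst : ∀ p ∈ (univ : Finset ι).offDiag,
      ∑ π : Equiv.Perm ι, f (π p.1) (π p.2) = ∑ π : Equiv.Perm ι, f (π a) (π b) := by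
    rintro ⟨x, y⟩ hxy
    have hxy : x ≠ y := (mem_offDiag.1 hxy).2.2
    obtain ⟨τ, hτ⟩ := Equiv.Perm.exists_extending_pair ![a, b] ![x, y]
      (by simp [Function.Injective, Fin.forall_fin_two, hab, hab.symm])
      (by simp [Function.Injective, Fin.forall_fin_two, hxy, hxy.symm])
    have ha : τ a = x := hτ 0
    have hb : τ b = y := hτ 1
    rw [← Equiv.sum_comp (Equiv.mulRight τ) (fun π => f (π a) (π b))]
    simp [Equiv.Perm.mul_apply, ha, hb]
  have hinv : ∀ π : Equiv.Perm ι,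
      ∑ p ∈ (univ : Finset ι).offDiag, f (π p.1) (π p.2) =
        ∑ p ∈ (univ : Finset ι).offDiag, f p.1 p.2 := by
    intro π
    rw [sum_offDiag_eq_sum_sub_sum_diag (fun i j => f (π i) (π j)),
      sum_offDiag_eq_sum_sub_sum_diag, Equiv.sum_comp π (fun i => f i i)]
    simp_rw [Equiv.sum_comp π (f _), Equiv.sum_comp π (fun i => ∑ j, f i j)]
  calc #(univ : Finset ι).offDiag * ∑ π : Equiv.Perm ι, f (π a) (π b)
      = ∑ p ∈ (univ : Finset ι).offDiag, ∑ π : Equiv.Perm ι, f (π p.1) (π p.2) := by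
        rw [sum_congr rfl hconst, sum_const, nsmul_eq_mul]
    _ = ∑ π : Equiv.Perm ι, ∑ p ∈ (univ : Finset ι).offDiag, f p.1 p.2 := by
        rw [sum_comm]
        exact sum_congr rfl fun π _ => hinv π
    _ = _ := by simp [Fintype.card_perm]

lemma card_offDiag_mul_tsym_stk_kerTensor (r : ℕ) (K : X → X → ℝ) (v : Fin (2 + r) → X) :
    #(univ : Finset (Fin (2 + r))).offDiag * tsym (2 + r) (stk 2 r (kerTensor K)) v =
      offDiagSum K v := by
  have h := sum_perm_apply_apply (a := Fin.castAdd r 0) (b := Fin.castAdd r 1)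
    (by simp [Fin.ext_iff]) (fun i j => K (v i) (v j))
  rw [sum_offDiag_eq_sum_sub_sum_diag (fun i j => K (v i) (v j)), Fintype.card_fin] at h
  change _ * ((_ : ℝ)⁻¹ * ∑ π : Equiv.Perm (Fin (2 + r)),
    K (v (π (Fin.castAdd r 0))) (v (π (Fin.castAdd r 1)))) = _
  rw [mul_left_comm, offDiagSum, h, ← mul_assoc, inv_mul_cancel₀ (by positivity), one_mul]

lemma tsym_tsym (d : ℕ) (T : (Fin d → X) → ℝ) : tsym d (tsym d T) = tsym d T := by
  funext v
  have hperm : ∀ π : Equiv.Perm (Fin d), tsym d T (v ∘ π) = tsym d T v := fun π => by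
    simp only [tsym]
    congr 1
    exact Equiv.sum_comp (Equiv.mulLeft π) (fun τ => T (v ∘ τ))
  rw [tsym, sum_congr rfl fun π _ => hperm π]
  simp [Fintype.card_perm, (Nat.factorial_pos d).ne']

lemma tsym_nonneg {d : ℕ} {N : (Fin d → X) → ℝ} (hN : ∀ v, 0 ≤ N v) (v : Fin d → X) :
    0 ≤ tsym d N v :=
  mul_nonneg (by positivity) (sum_nonneg fun _ _ => hN _)

lemma crCond_iff (r : ℕ) (K : X → X → ℝ) :
    CrCond r K ↔ ∀ v : Fin (2 + r) → X, 0 ≤ offDiagSum K v := by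
  simp only [← card_offDiag_mul_tsym_stk_kerTensor]
  constructor
  · rintro ⟨N, hN, hKN⟩ v
    exact mul_nonneg (Nat.cast_nonneg _) (hKN ▸ tsym_nonneg hN v)
  · intro h
    have hcard : (0 : ℝ) < #(univ : Finset (Fin (2 + r))).offDiag := by
      exact_mod_cast card_pos.2 ⟨(Fin.castAdd r 0, Fin.castAdd r 1), by simp [Fin.ext_iff]⟩
    exact ⟨_, fun v => nonneg_of_mul_nonneg_right (h v) hcard, (tsym_tsym _ _).symm⟩

lemma offDiagSum_comp_succAbove {m : ℕ} (K : X → X → ℝ) (v : Fin (m + 1) → X)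
    (k : Fin (m + 1)) :
    offDiagSum K (v ∘ k.succAbove) = offDiagSum K v -
      (∑ j, K (v k) (v j) + ∑ i, K (v i) (v k) - 2 * K (v k) (v k)) := by
  simp only [offDiagSum, Function.comp_apply, Fin.sum_univ_succAbove _ k, sum_add_distrib]
  ring

lemma sum_offDiagSum_comp_succAbove {m : ℕ} (K : X → X → ℝ) (v : Fin (m + 1) → X) :
    ∑ k : Fin (m + 1), offDiagSum K (v ∘ k.succAbove) = (m - 1) * offDiagSum K v := by
  simp only [offDiagSum_comp_succAbove, sum_sub_distrib, sum_add_distrib, ← mul_sum, sum_const,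
    card_univ, Fintype.card_fin, nsmul_eq_mul, Nat.cast_add, Nat.cast_one]
  rw [sum_comm (f := fun k i => K (v i) (v k))]
  simp only [offDiagSum]
  ring

lemma offDiagSum_nonneg_succ {m : ℕ} (hm : 2 ≤ m) {K : X → X → ℝ}
    (h : ∀ v : Fin m → X, 0 ≤ offDiagSum K v) (v : Fin (m + 1) → X) :
    0 ≤ offDiagSum K v := by
  have hm' : (0 : ℝ) < m - 1 := by
    have : (2 : ℝ) ≤ m := by exact_mod_cast hm
    linarith
  exact nonneg_of_mul_nonneg_right
    (sum_offDiagSum_comp_succAbove K v ▸ sum_nonneg fun k _ => h _) hm'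

lemma offDiagSum_nonneg_mono {m m' : ℕ} (hm : 2 ≤ m) (hmm' : m ≤ m') {K : X → X → ℝ}
    (h : ∀ v : Fin m → X, 0 ≤ offDiagSum K v) (v : Fin m' → X) : 0 ≤ offDiagSum K v := by
  induction m', hmm' using Nat.le_induction with
  | base => exact h v
  | succ k hk ih => exact offDiagSum_nonneg_succ (hm.trans hk) ih v

lemma memCr.succ [TopologicalSpace X] {r : ℕ} {K : X → X → ℝ} (hK : memCr r K) :
    memCr (r + 1) K :=
  ⟨hK.1, (crCond_iff _ K).2 <|
    offDiagSum_nonneg_succ (Nat.le_add_right 2 r) ((crCond_iff r K).1 hK.2)⟩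

lemma offDiagSum_replicate {a q : ℕ} (K : X → X → ℝ) (w : Fin a → X) :
    offDiagSum K (fun i : Fin (a * q) => w (finProdFinEquiv.symm i).1) =
      q ^ 2 * ∑ s, ∑ t, K (w s) (w t) - q * ∑ s, K (w s) (w s) := by
  have hsum : ∀ f : Fin (a * q) → ℝ, ∑ i, f i = ∑ p : Fin a × Fin q, f (finProdFinEquiv p) :=
    fun f => (finProdFinEquiv.sum_comp f).symm
  simp only [offDiagSum, hsum, Equiv.symm_apply_apply, Fintype.sum_prod_type]
  simp only [sum_const, card_univ, Fintype.card_fin, nsmul_eq_mul, mul_sum, sub_left_inj]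
  ring_nf

lemma le_of_offDiagSum_nonneg {a q : ℕ} (ha : 1 ≤ a) (hq : 2 ≤ q) {K : X → X → ℝ} {l : ℝ}
    (h : ∀ v : Fin (a * q) → X, 0 ≤ offDiagSum K v) (w : Fin a → X)
    (hdiag : ∀ s, K (w s) (w s) = l - 1) (hoff : ∀ s t, s ≠ t → K (w s) (w t) = -1) :
    (a : ℝ) ≤ l := by
  have hw : ∀ s t, K (w s) (w t) = (if s = t then l else 0) - 1 := fun s t => by
    split_ifs with hst
    · rw [hst, hdiag]
    · rw [hoff s t hst, zero_sub]
  have key := h fun i => w (finProdFinEquiv.symm i).1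
  rw [offDiagSum_replicate] at key
  simp only [hw, sum_sub_distrib, sum_ite_eq, mem_univ, if_true, sum_const, card_univ,
    Fintype.card_fin, nsmul_eq_mul, mul_one] at key
  have ha' : (1 : ℝ) ≤ a := by exact_mod_cast ha
  have hq' : (2 : ℝ) ≤ q := by exact_mod_cast hq
  have hrow : 0 ≤ q * (l - a) - (l - 1) :=
    nonneg_of_mul_nonneg_right (a := (q * a : ℝ)) (key.trans_eq (by ring)) (by positivity)
  nlinarith

lemma offDiagSum_nonneg_of_isCopositiveKernel_sub {K : X → X → ℝ} {δ c : ℝ}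
    (hcop : IsCopositiveKernel fun u v => K u v - δ) (hdiag : ∀ v, K v v = c) {m : ℕ}
    (hm : c ≤ m * δ) (v : Fin m → X) : 0 ≤ offDiagSum K v := by
  have h := hcop m v (fun _ => 1) fun _ => zero_le_one
  simp only [mul_one, sum_sub_distrib, sum_const, card_univ, Fintype.card_fin,
    nsmul_eq_mul] at h
  simp only [offDiagSum, hdiag, sum_const, card_univ, Fintype.card_fin, nsmul_eq_mul]
  nlinarith [Nat.cast_nonneg (α := ℝ) m]

end OffDiagonalSums

section Copositivity

variable {X : Type*}

lemma IsCopositiveKernel.mul_add_mul {K₁ K₂ : X → X → ℝ} (h₁ : IsCopositiveKernel K₁)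
    (h₂ : IsCopositiveKernel K₂) {c₁ c₂ : ℝ} (hc₁ : 0 ≤ c₁) (hc₂ : 0 ≤ c₂) :
    IsCopositiveKernel fun u v => c₁ * K₁ u v + c₂ * K₂ u v := by
  intro k v x hx
  have h : ∑ i, ∑ j, (c₁ * K₁ (v i) (v j) + c₂ * K₂ (v i) (v j)) * x i * x j =
      c₁ * ∑ i, ∑ j, K₁ (v i) (v j) * x i * x j + c₂ * ∑ i, ∑ j, K₂ (v i) (v j) * x i * x j := by
    simp only [Finset.mul_sum, ← Finset.sum_add_distrib]
    exact Finset.sum_congr rfl fun i _ => Finset.sum_congr rfl fun j _ => by ring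
  rw [h]
  exact add_nonneg (mul_nonneg hc₁ (h₁ k v x hx)) (mul_nonneg hc₂ (h₂ k v x hx))

lemma IsCopositiveKernel.diag_mem {E : Set (X × X)} {K : X → X → ℝ}
    (hK : IsCopositiveKernel K) (hoff : ∀ u v, (u, v) ∉ E → K u v = -1) (u : X) :
    (u, u) ∈ E := by
  by_contra hu
  have := hK 1 (fun _ => u) (fun _ => 1) fun _ => zero_le_one
  norm_num [hoff u u hu] at this

end Copositivity

section MotzkinStraus

open Finset Matrix

variable {ι : Type*} [Fintype ι] [DecidableEq ι]

lemma dotProduct_mulVec_add_smul_single_sub_single {W : Matrix ι ι ℝ} (hW : W.IsSymm)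
    (y : ι → ℝ) (t : ℝ) (i j : ι) :
    (y + t • (Pi.single i 1 - Pi.single j 1)) ⬝ᵥ W *ᵥ (y + t • (Pi.single i 1 - Pi.single j 1)) =
      y ⬝ᵥ W *ᵥ y + 2 * t * ((W *ᵥ y) i - (W *ᵥ y) j) +
        t ^ 2 * (W i i - W i j - W j i + W j j) := by
  have hsymm : ∀ k, y ⬝ᵥ W.col k = (W *ᵥ y) k := fun k => by
    simp only [dotProduct, mulVec, col_apply, hW.apply k, mul_comm]
  simp only [mulVec_add, mulVec_smul, mulVec_sub, add_dotProduct, dotProduct_add,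
    smul_dotProduct, dotProduct_smul, sub_dotProduct, dotProduct_sub, single_dotProduct,
    mulVec_single_one, hsymm, smul_eq_mul, one_mul]
  simp only [col_apply]
  ring

namespace SimpleGraph

variable (G : SimpleGraph ι) [DecidableRel G.Adj]

lemma dotProduct_self_le_dotProduct_one_add_adjMatrix {y : ι → ℝ} (hy : 0 ≤ y) :
    y ⬝ᵥ y ≤ y ⬝ᵥ (1 + G.adjMatrix ℝ) *ᵥ y := by
  rw [add_mulVec, one_mulVec, dotProduct_add, le_add_iff_nonneg_right]
  refine dotProduct_nonneg_of_nonneg hy fun i => ?_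
  rw [adjMatrix_mulVec_apply]
  exact sum_nonneg fun j _ => hy j

lemma sq_sum_le_of_isIndepSet_support {a : ℕ}
    (hα : ∀ s : Finset ι, G.IsIndepSet (s : Set ι) → #s ≤ a) {y : ι → ℝ} (hy : 0 ≤ y)
    (hS : G.IsIndepSet ({i | y i ≠ 0} : Finset ι)) :
    (∑ i, y i) ^ 2 ≤ a * (y ⬝ᵥ (1 + G.adjMatrix ℝ) *ᵥ y) :=
  calc (∑ i, y i) ^ 2 = (∑ i ∈ {i | y i ≠ 0}, y i) ^ 2 := by rw [sum_filter_ne_zero]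
    _ ≤ #{i | y i ≠ 0} * ∑ i ∈ {i | y i ≠ 0}, y i ^ 2 := sq_sum_le_card_mul_sum_sq
    _ ≤ a * (y ⬝ᵥ y) := by
        gcongr
        · exact_mod_cast hα _ hS
        · exact (sum_le_univ_sum_of_nonneg fun i => sq_nonneg _).trans_eq
            (by simp [dotProduct, sq])
    _ ≤ a * (y ⬝ᵥ (1 + G.adjMatrix ℝ) *ᵥ y) := by
        gcongr
        exact G.dotProduct_self_le_dotProduct_one_add_adjMatrix hy

lemma exists_smaller_support_of_not_isIndepSet {y : ι → ℝ} (hy : 0 ≤ y)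
    (hS : ¬G.IsIndepSet ({i | y i ≠ 0} : Finset ι)) :
    ∃ y' : ι → ℝ, 0 ≤ y' ∧ ∑ i, y' i = ∑ i, y i ∧
      ({i | y' i ≠ 0} : Finset ι) ⊂ ({i | y i ≠ 0} : Finset ι) ∧
      y' ⬝ᵥ (1 + G.adjMatrix ℝ) *ᵥ y' ≤ y ⬝ᵥ (1 + G.adjMatrix ℝ) *ᵥ y := by
  obtain ⟨i, hi, j, hj, hij, hadj⟩ : ∃ i ∈ ({i | y i ≠ 0} : Finset ι),
      ∃ j ∈ ({i | y i ≠ 0} : Finset ι), i ≠ j ∧ G.Adj i j := by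
    simpa [IsIndepSet, Set.Pairwise] using hS
  set W := 1 + G.adjMatrix ℝ
  -- Moving the weight of `j` onto its neighbour `i` changes the quadratic form by
  -- `2 y j ((W y) i - (W y) j)`, since `W = 1` on `{i, j}²`.
  wlog hle : (W *ᵥ y) i ≤ (W *ᵥ y) j generalizing i j
  · exact this j hj i hi hij.symm hadj.symm (le_of_not_ge hle)
  set y' := y + y j • (Pi.single i 1 - Pi.single j 1) with hy'_def
  have hy'_apply : ∀ l, y' l = if l = i then y i + y j else if l = j then 0 else y l := by
    intro l
    by_cases hli : l = i
    · subst hli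
      simp [y', hij]
    · by_cases hlj : l = j
      · subst hlj
        simp [y', hli]
      · simp [y', hli, hlj]
  refine ⟨y', fun l => ?_, by simp [y', sum_add_distrib, sum_sub_distrib, ← mul_sum], ?_, ?_⟩
  · rw [hy'_apply]
    split_ifs
    exacts [add_nonneg (hy i) (hy j), le_rfl, hy l]
  · refine (ssubset_iff_of_subset fun l hl => ?_).2 ⟨j, hj, by simp [hy'_apply, hij.symm]⟩
    simp only [mem_filter, mem_univ, true_and, hy'_apply] at hl ⊢
    split_ifs at hl with hli hlj
    exacts [hli ▸ (mem_filter.1 hi).2, absurd rfl hl, hl]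
  · have hW : W i i - W i j - W j i + W j j = 0 := by
      simp [W, one_apply, hadj, hadj.symm, hij, hij.symm]
    rw [hy'_def, dotProduct_mulVec_add_smul_single_sub_single
      (isSymm_one.add G.isSymm_adjMatrix), hW, mul_zero, add_zero, add_le_iff_nonpos_right]
    exact mul_nonpos_of_nonneg_of_nonpos (mul_nonneg zero_le_two (hy j)) (sub_nonpos.2 hle)

/- The Motzkin–Straus inequality. -/
theorem sq_sum_le_mul_dotProduct_one_add_adjMatrix {a : ℕ}
    (hα : ∀ s : Finset ι, G.IsIndepSet (s : Set ι) → #s ≤ a) {y : ι → ℝ} (hy : 0 ≤ y) :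
    (∑ i, y i) ^ 2 ≤ a * (y ⬝ᵥ (1 + G.adjMatrix ℝ) *ᵥ y) := by
  induction hn : #{i | y i ≠ 0} using Nat.strong_induction_on generalizing y with
  | _ n ih =>
  by_cases hS : G.IsIndepSet ({i | y i ≠ 0} : Finset ι)
  · exact G.sq_sum_le_of_isIndepSet_support hα hy hS
  obtain ⟨y', hy', hsum, hsupp, hQ⟩ := G.exists_smaller_support_of_not_isIndepSet hy hS
  calc (∑ i, y i) ^ 2 = (∑ i, y' i) ^ 2 := by rw [hsum]
    _ ≤ a * (y' ⬝ᵥ (1 + G.adjMatrix ℝ) *ᵥ y') := ih _ (hn ▸ card_lt_card hsupp) hy' rfl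
    _ ≤ a * (y ⬝ᵥ (1 + G.adjMatrix ℝ) *ᵥ y) := by gcongr

end SimpleGraph

end MotzkinStraus

section KernelsFromMatrices

open Finset Matrix

variable {X ι : Type*} [Fintype ι]

lemma sum_sum_dotProduct_mulVec_mul_mul (M : Matrix ι ι ℝ) (f : X → ι → ℝ) {k : ℕ}
    (v : Fin k → X) (x : Fin k → ℝ) :
    ∑ b, ∑ c, f (v b) ⬝ᵥ M *ᵥ f (v c) * x b * x c =
      (∑ b, x b • f (v b)) ⬝ᵥ M *ᵥ ∑ c, x c • f (v c) := by
  simp only [mulVec_sum, mulVec_smul, sum_dotProduct, smul_dotProduct, dotProduct_sum,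
    dotProduct_smul, smul_eq_mul, mul_sum]
  conv_rhs => rw [sum_comm]
  exact sum_congr rfl fun b _ => sum_congr rfl fun c _ => by ring

lemma dotProduct_mulVec_eq_of_forall {M : Matrix ι ι ℝ} {x y : ι → ℝ} {c : ℝ}
    (h : ∀ i j, x i ≠ 0 → y j ≠ 0 → M i j = c) :
    x ⬝ᵥ M *ᵥ y = c * (∑ i, x i) * ∑ j, y j := by
  rw [mul_assoc, sum_mul_sum, mul_sum]
  simp only [dotProduct, mulVec, mul_sum]
  refine sum_congr rfl fun i _ => sum_congr rfl fun j _ => ?_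
  by_cases hx : x i = 0
  · simp [hx]
  by_cases hy : y j = 0
  · simp [hy]
  rw [h i j hx hy]
  ring

lemma dotProduct_mulVec_comm {W : Matrix ι ι ℝ} (hW : W.IsSymm) (x y : ι → ℝ) :
    x ⬝ᵥ W *ᵥ y = y ⬝ᵥ W *ᵥ x := by
  rw [dotProduct_mulVec, dotProduct_comm, ← mulVec_transpose, hW.eq]

lemma isCopositiveKernel_of_isIndepSet_card_le [DecidableEq ι] (G : SimpleGraph ι)
    [DecidableRel G.Adj] {a : ℕ} (hα : ∀ s : Finset ι, G.IsIndepSet (s : Set ι) → #s ≤ a)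
    {Φ : X → ι → ℝ} (hΦ0 : ∀ u, 0 ≤ Φ u) (hΦ1 : ∀ u, ∑ i, Φ u i = 1) :
    IsCopositiveKernel fun u v => a * (Φ u ⬝ᵥ (1 + G.adjMatrix ℝ) *ᵥ Φ v) - 1 := by
  intro k v x hx
  set y := ∑ b, x b • Φ (v b)
  have hy : 0 ≤ y := sum_nonneg fun b _ => smul_nonneg (hx b) (hΦ0 _)
  have hsum : ∑ i, y i = ∑ b, x b := by
    simp only [y, Finset.sum_apply, Pi.smul_apply, smul_eq_mul]
    rw [sum_comm]
    simp [← mul_sum, hΦ1]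
  have hexp : ∑ b, ∑ c, (a * (Φ (v b) ⬝ᵥ (1 + G.adjMatrix ℝ) *ᵥ Φ (v c)) - 1) * x b * x c =
      a * (y ⬝ᵥ (1 + G.adjMatrix ℝ) *ᵥ y) - (∑ b, x b) ^ 2 := by
    rw [← sum_sum_dotProduct_mulVec_mul_mul, sq, sum_mul_sum, mul_sum, ← sum_sub_distrib]
    refine sum_congr rfl fun b _ => ?_
    rw [mul_sum, ← sum_sub_distrib]
    exact sum_congr rfl fun c _ => by ring
  rw [hexp, ← hsum, sub_nonneg]
  exact G.sq_sum_le_mul_dotProduct_one_add_adjMatrix hα hy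

end KernelsFromMatrices

section PackingGraphs

open Metric Uniformity

variable {X : Type*} {E : Set (X × X)}

lemma isOpen_of_forall_finite_pairwise [TopologicalSpace X]
    (hsymm : ∀ u v, (u, v) ∈ E → (v, u) ∈ E) (hrefl : ∀ u, (u, u) ∈ E)
    (hpack : ∀ C : Set X, C.Finite → C.Pairwise (fun x y => (x, y) ∈ E) →
      ∃ D : Set X, IsOpen D ∧ D.Pairwise (fun x y => (x, y) ∈ E) ∧ C ⊆ D) :
    IsOpen E := by
  refine isOpen_iff_mem_nhds.2 fun ⟨x, y⟩ hxy => ?_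
  obtain ⟨D, hDo, hD, hxyD⟩ := hpack {x, y} (Set.toFinite _)
    (Set.pairwise_pair.2 fun _ => ⟨hxy, hsymm _ _ hxy⟩)
  refine Filter.mem_of_superset (prod_mem_nhds (hDo.mem_nhds (hxyD (Set.mem_insert _ _)))
    (hDo.mem_nhds (hxyD (Set.mem_insert_of_mem _ rfl)))) fun ⟨u, v⟩ ⟨hu, hv⟩ => ?_
  rcases eq_or_ne u v with rfl | huv
  exacts [hrefl u, hD hu hv huv]

lemma exists_ne_notMem_compl_of_card_le (hrefl : ∀ u, (u, u) ∈ E) {a : ℕ}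
    (hstab : ∀ s : Finset X, (s : Set X).Pairwise (fun x y => (x, y) ∉ E) → s.card ≤ a)
    (p : Fin (a + 1) → X) : ∃ s t, s ≠ t ∧ (p s, p t) ∉ Eᶜ := by
  classical
  by_contra! h
  have hp : Function.Injective p := fun s t hst => by
    by_contra hne
    exact h s t hne (hst ▸ hrefl _)
  have := hstab (Finset.univ.image p) fun x hx y hy hxy => by
    obtain ⟨s, -, rfl⟩ := Finset.mem_image.1 (Finset.mem_coe.1 hx)
    obtain ⟨t, -, rfl⟩ := Finset.mem_image.1 (Finset.mem_coe.1 hy)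
    exact h s t fun hst => hxy (hst ▸ rfl)
  rw [Finset.card_image_of_injective _ hp, Finset.card_univ, Fintype.card_fin] at this
  omega

variable [PseudoMetricSpace X] [CompactSpace X]

lemma exists_pos_forall_dist_lt_mem (hE : IsOpen E) (hrefl : ∀ u, (u, u) ∈ E) :
    ∃ δ > 0, ∀ u v, dist u v < δ → (u, v) ∈ E := by
  have : E ∈ 𝓤 X := nhdsSet_diagonal_eq_uniformity (α := X) ▸
    hE.mem_nhdsSet.2 (Set.diagonal_subset_iff.2 hrefl)
  obtain ⟨δ, hδ, h⟩ := mem_uniformity_dist.1 this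
  exact ⟨δ, hδ, fun u v => @h u v⟩

lemma exists_forall_pairwise_card_le (hE : IsOpen E) (hrefl : ∀ u, (u, u) ∈ E) :
    ∃ N : ℕ, ∀ S : Finset X, (S : Set X).Pairwise (fun x y => (x, y) ∉ E) → S.card ≤ N := by
  obtain ⟨δ, hδ, hδE⟩ := exists_pos_forall_dist_lt_mem hE hrefl
  obtain ⟨t, ht⟩ := isCompact_univ.elim_finite_subcover (fun x : X => ball x (δ / 2))
    (fun _ => isOpen_ball) fun x _ => Set.mem_iUnion.2 ⟨x, mem_ball_self (by positivity)⟩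
  choose c hct hc using fun x => Set.mem_iUnion₂.1 (ht (Set.mem_univ x))
  refine ⟨t.card, fun S hS => Finset.card_le_card_of_injOn c (fun x _ => hct x) ?_⟩
  intro x hx y hy hxy
  by_contra hne
  refine hS hx hy hne (hδE x y ?_)
  have hx' := mem_ball.1 (hc x)
  have hy' := mem_ball.1 (hc y)
  rw [← hxy] at hy'
  linarith [dist_triangle_right x y (c x)]

lemma exists_pos_forall_exists_notMem_cthickening {N : Set (X × X)} (hN : IsClosed N)
    {m : ℕ} (h : ∀ p : Fin m → X, ∃ s t, s ≠ t ∧ (p s, p t) ∉ N) :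
    ∃ ρ > 0, ∀ p : Fin m → X, ∃ s t, s ≠ t ∧ (p s, p t) ∉ cthickening ρ N := by
  let F : Set.Ioi (0 : ℝ) → Set (Fin m → X) := fun ρ =>
    ⋂ s, ⋂ t, ⋂ (_ : s ≠ t), (fun p => (p s, p t)) ⁻¹' cthickening ρ N
  have hF : ∀ ρ, IsClosed (F ρ) := fun ρ => isClosed_iInter fun s => isClosed_iInter fun t =>
    isClosed_iInter fun _ => isClosed_cthickening.preimage (by fun_prop)
  have hFmono : Monotone F := fun ρ ρ' hρ => Set.iInter_mono fun s => Set.iInter_mono fun t =>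
    Set.iInter_mono fun _ => Set.preimage_mono (cthickening_mono hρ N)
  have : Nonempty (Set.Ioi (0 : ℝ)) := ⟨⟨1, Set.mem_Ioi.2 one_pos⟩⟩
  have hempty : Set.univ ∩ ⋂ ρ, F ρ = ∅ := by
    refine Set.eq_empty_iff_forall_notMem.2 fun p ⟨_, hp⟩ => ?_
    simp only [F, Set.mem_iInter, Set.mem_preimage] at hp
    obtain ⟨s, t, hst, hpN⟩ := h p
    refine hpN (hN.closure_eq ▸ ?_)
    rw [closure_eq_iInter_cthickening]
    exact Set.mem_iInter₂.2 fun ρ hρ => hp ⟨ρ, hρ⟩ s t hst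
  obtain ⟨ρ, hρ⟩ := isCompact_univ.elim_directed_family_closed F hF hempty hFmono.directed_ge
  refine ⟨ρ, ρ.2, fun p => ?_⟩
  have : p ∉ F ρ := fun hp => (Set.eq_empty_iff_forall_notMem.1 hρ) p ⟨trivial, hp⟩
  simpa [F] using this

lemma exists_scale_of_card_le (hE : IsOpen E) (hrefl : ∀ u, (u, u) ∈ E) {a : ℕ}
    (hstab : ∀ s : Finset X, (s : Set X).Pairwise (fun x y => (x, y) ∉ E) → s.card ≤ a) :
    ∃ ρ > 0, (∀ u v, dist u v < 4 * ρ → (u, v) ∈ E) ∧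
      ∀ p : Fin (a + 1) → X, ∃ s t, s ≠ t ∧ (p s, p t) ∉ thickening ρ Eᶜ := by
  obtain ⟨δ, hδ, hδE⟩ := exists_pos_forall_dist_lt_mem hE hrefl
  obtain ⟨ρ₀, hρ₀, hρ₀E⟩ := exists_pos_forall_exists_notMem_cthickening hE.isClosed_compl
    (exists_ne_notMem_compl_of_card_le hrefl hstab)
  refine ⟨min ρ₀ (δ / 4), lt_min hρ₀ (by positivity),
    fun u v huv => hδE u v (by linarith [min_le_right ρ₀ (δ / 4)]), fun p => ?_⟩
  obtain ⟨s, t, hst, hp⟩ := hρ₀E p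
  exact ⟨s, t, hst, fun h => hp (thickening_subset_cthickening_of_le (min_le_left _ _) _ h)⟩

end PackingGraphs

section ThickeningGraph

open Metric

variable {X ι : Type*} [PseudoMetricSpace X] {E : Set (X × X)} {ρ : ℝ}

/- `i` and `j` are adjacent iff no non-edge `(u, v)` has `u` and `v` within `ρ` of `c i` and
`c j` respectively (or the same with `i` and `j` exchanged). -/
def thickeningGraph (E : Set (X × X)) (ρ : ℝ) (c : ι → X) : SimpleGraph ι :=
  SimpleGraph.fromRel fun i j => (c i, c j) ∉ thickening ρ Eᶜ

lemma mem_thickening_compl {x y u v : X} (huv : (u, v) ∉ E) (hu : dist u x < ρ)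
    (hv : dist v y < ρ) : (x, y) ∈ thickening ρ Eᶜ :=
  mem_thickening_iff.2 ⟨(u, v), huv, by
    rw [Prod.dist_eq, dist_comm x, dist_comm y]
    exact max_lt hu hv⟩

lemma thickeningGraph_adj_of_dist_lt (hρ : ∀ u v, dist u v < 4 * ρ → (u, v) ∈ E) {c : ι → X}
    {i j : ι} (hij : i ≠ j) {z : X} (hi : dist z (c i) < ρ) (hj : dist z (c j) < ρ) : (thickeningGraph E ρ c).Adj i j := by
  refine ⟨hij, Or.inl fun h => ?_⟩
  obtain ⟨⟨u, v⟩, huv, hd⟩ := mem_thickening_iff.1 h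
  obtain ⟨hu, hv⟩ : dist (c i) u < ρ ∧ dist (c j) v < ρ := by
    simpa [Prod.dist_eq] using hd
  have := dist_triangle4 u (c i) (c j) v
  have := dist_triangle (c i) z (c j)
  exact huv (hρ u v (by linarith [dist_comm u (c i), dist_comm (c i) z]))

lemma not_thickeningGraph_adj (hsymm : ∀ u v, (u, v) ∈ E → (v, u) ∈ E) {c : ι → X}
    {i j : ι} {u v : X} (huv : (u, v) ∉ E) (hu : dist u (c i) < ρ) (hv : dist v (c j) < ρ) :
    ¬(thickeningGraph E ρ c).Adj i j := by
  rintro ⟨-, h | h⟩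
  exacts [h (mem_thickening_compl huv hu hv),
    h (mem_thickening_compl (fun h' => huv (hsymm _ _ h')) hv hu)]

lemma card_le_of_isIndepSet_thickeningGraph {a : ℕ}
    (hρ : ∀ p : Fin (a + 1) → X, ∃ s t, s ≠ t ∧ (p s, p t) ∉ thickening ρ Eᶜ) {c : ι → X}
    (s : Finset ι) (hs : (thickeningGraph E ρ c).IsIndepSet (s : Set ι)) : s.card ≤ a := by
  by_contra! has
  let e : Fin (a + 1) → s := fun k => s.equivFin.symm (Fin.castLE has k)
  have he : Function.Injective e :=
    s.equivFin.symm.injective.comp (Fin.castLE_injective has)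
  obtain ⟨k, l, hkl, hp⟩ := hρ (c ∘ (↑) ∘ e)
  have hne : (e k : ι) ≠ e l := fun h => hkl (he (Subtype.ext h))
  exact hs (e k).2 (e l).2 hne ⟨hne, Or.inl hp⟩

end ThickeningGraph

section PackingKernel

open Metric Matrix

variable {X : Type*} [MetricSpace X] [CompactSpace X]

lemma exists_partitionOfUnity_dist_lt {ρ : ℝ} (hρ : 0 < ρ) :
    ∃ (t : Finset X) (φ : PartitionOfUnity t X), ∀ i u, φ i u ≠ 0 → dist u i < ρ := by
  obtain ⟨t, ht⟩ := isCompact_univ.elim_finite_subcover (fun x : X => ball x ρ)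
    (fun _ => isOpen_ball) fun x _ => Set.mem_iUnion.2 ⟨x, mem_ball_self hρ⟩
  obtain ⟨φ, hφ⟩ := PartitionOfUnity.exists_isSubordinate isClosed_univ
    (fun i : t => ball (i : X) ρ) (fun _ => isOpen_ball) fun x hx => by
      obtain ⟨i, hi, hxi⟩ := Set.mem_iUnion₂.1 (ht hx)
      exact Set.mem_iUnion.2 ⟨⟨i, hi⟩, hxi⟩
  exact ⟨t, φ, fun i u hu => hφ i (subset_tsupport _ hu)⟩

theorem exists_isCopositiveKernel_of_isOpen {E : Set (X × X)} (hE : IsOpen E)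
    (hsymm : ∀ u v, (u, v) ∈ E → (v, u) ∈ E) (hrefl : ∀ u, (u, u) ∈ E) {a : ℕ}
    (hstab : ∀ s : Finset X, (s : Set X).Pairwise (fun x y => (x, y) ∉ E) → s.card ≤ a) :
    ∃ K : X → X → ℝ, IsKernel K ∧ IsCopositiveKernel K ∧ (∀ v, K v v = a - 1) ∧
      ∀ u v, (u, v) ∉ E → K u v = -1 := by
  classical
  obtain ⟨ρ, hρ, hρE, hρα⟩ := exists_scale_of_card_le hE hrefl hstab
  obtain ⟨t, φ, hφ⟩ := exists_partitionOfUnity_dist_lt (X := X) hρ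
  set G := thickeningGraph E ρ ((↑) : t → X)
  set Φ : X → t → ℝ := fun u i => φ i u
  have hΦ1 : ∀ u, ∑ i, Φ u i = 1 := fun u => by
    simpa [Φ, finsum_eq_sum_of_fintype] using φ.sum_eq_one (Set.mem_univ u)
  have hΦ : Continuous Φ := continuous_pi fun i => (φ i).continuous
  refine ⟨fun u v => a * (Φ u ⬝ᵥ (1 + G.adjMatrix ℝ) *ᵥ Φ v) - 1, ⟨?_, fun u v => ?_⟩,
    isCopositiveKernel_of_isIndepSet_card_le G
      (card_le_of_isIndepSet_thickeningGraph hρα) (fun u i => φ.nonneg i u) hΦ1,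
    fun v => ?_, fun u v huv => ?_⟩
  · exact (continuous_const.mul ((hΦ.comp continuous_fst).dotProduct
      (continuous_const.matrix_mulVec (hΦ.comp continuous_snd)))).sub continuous_const
  · dsimp only
    rw [dotProduct_mulVec_comm (isSymm_one.add G.isSymm_adjMatrix)]
  · dsimp only
    rw [dotProduct_mulVec_eq_of_forall (c := 1), hΦ1, mul_one, mul_one, mul_one]
    intro i j hi hj
    rcases eq_or_ne i j with rfl | hij
    · simp
    · have hadj : G.Adj i j := thickeningGraph_adj_of_dist_lt hρE hij (hφ i v hi) (hφ j v hj)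
      simp [hij, hadj]
  · dsimp only
    rw [dotProduct_mulVec_eq_of_forall (c := 0), zero_mul, zero_mul, mul_zero, zero_sub]
    intro i j hi hj
    have hij : i ≠ j := by
      rintro rfl
      have := dist_triangle_right u v i
      exact huv (hρE u v (by linarith [hφ i u hi, hφ i v hj]))
    have hadj : ¬G.Adj i j := not_thickeningGraph_adj hsymm huv (hφ i u hi) (hφ j v hj)
    simp [hij, hadj]

end PackingKernel

section GammaVal

variable {n : ℕ} {V : Set (Fin n → ℝ)} {E : Set (↥V × ↥V)}

lemma isGreatest_stabilityNumber [CompactSpace V] (hE : IsOpen E) (hrefl : ∀ u, (u, u) ∈ E) :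
    IsGreatest {k | ∃ S : Finset V, (S : Set V).Pairwise (fun x y => (x, y) ∉ E) ∧ S.card = k}
      (stabilityNumber V E) := by
  obtain ⟨N, hN⟩ := exists_forall_pairwise_card_le hE hrefl
  have hbdd : BddAbove {k | ∃ S : Finset V,
      (S : Set V).Pairwise (fun x y => (x, y) ∉ E) ∧ S.card = k} :=
    ⟨N, fun _ ⟨S, hS, hk⟩ => hk ▸ hN S hS⟩
  exact ⟨Nat.sSup_mem ⟨0, ∅, by simp⟩ hbdd, fun _ hk => le_csSup hbdd hk⟩

lemma exists_pos_isCopositiveKernel_sub {K : KernelSpace V} (hK : K ∈ interior (COPSet V)) :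
    ∃ δ > 0, IsCopositiveKernel fun u v => K.1 (u, v) - δ := by
  let f : ℝ → KernelSpace V := fun c =>
    ⟨K.1 - ContinuousMap.const _ c, fun x y => by simp [K.2 x y]⟩
  have hf : Continuous f :=
    (continuous_const.sub ContinuousMap.continuous_const').subtype_mk _
  have hf0 : f 0 = K := Subtype.ext (by ext; simp [f])
  have hev : ∀ᶠ c in 𝓝[>] (0 : ℝ), f c ∈ COPSet V ∧ 0 < c :=
    (eventually_nhdsWithin_of_eventually_nhds (hf.tendsto' 0 K hf0 |>.eventually
      (mem_interior_iff_mem_nhds.1 hK))).and self_mem_nhdsWithin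
  obtain ⟨δ, hδK, hδ⟩ := hev.exists
  exact ⟨δ, hδ, hδK⟩

lemma gammaVal_le {r : ℕ} {K : V → V → ℝ} (hK : memCr r K) {l : ℝ} (hdiag : ∀ v, K v v = l - 1)
    (hoff : ∀ u v, (u, v) ∉ E → K u v = -1) : gammaVal V E r ≤ l :=
  sInf_le ⟨l, rfl, K, hK, hdiag, hoff⟩

lemma gammaVal_antitone : Antitone (gammaVal V E) :=
  antitone_nat_of_succ_le fun _ =>
    sInf_le_sInf fun _ ⟨l, hl, K, hK, hKl⟩ => ⟨l, hl, K, hK.succ, hKl⟩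

lemma card_le_gammaVal {S : Finset V} (hS : (S : Set V).Pairwise (fun x y => (x, y) ∉ E))
    (hSne : S.Nonempty) (r : ℕ) : ((S.card : ℝ) : EReal) ≤ gammaVal V E r := by
  refine le_sInf ?_
  rintro _ ⟨l, rfl, K, ⟨-, hK⟩, hdiag, hoff⟩
  have hS1 : 1 ≤ S.card := hSne.card_pos
  let w : Fin S.card → V := fun s => S.equivFin.symm s
  refine EReal.coe_le_coe_iff.2 <| le_of_offDiagSum_nonneg hS1 (Nat.le_add_right 2 r)
    (offDiagSum_nonneg_mono (Nat.le_add_right 2 r) (Nat.le_mul_of_pos_left (2 + r) hS1)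
      ((crCond_iff r K).1 hK)) w (fun s => hdiag _) fun s t hst => hoff _ _ ?_
  exact hS (S.equivFin.symm s).2 (S.equivFin.symm t).2
    fun h => hst (S.equivFin.symm.injective (Subtype.ext h))

lemma eventually_gammaVal_le {K : V → V → ℝ} (hK : IsKernel K) {δ : ℝ} (hδ : 0 < δ)
    (hcop : IsCopositiveKernel fun u v => K u v - δ) {l : ℝ} (hdiag : ∀ v, K v v = l - 1)
    (hoff : ∀ u v, (u, v) ∉ E → K u v = -1) : ∀ᶠ r in atTop, gammaVal V E r ≤ l := by
  obtain ⟨m, hm⟩ := exists_nat_ge ((l - 1) / δ)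
  filter_upwards [eventually_ge_atTop m] with r hr
  refine gammaVal_le ⟨hK, (crCond_iff r K).2 fun v =>
    offDiagSum_nonneg_of_isCopositiveKernel_sub hcop hdiag ?_ v⟩ hdiag hoff
  have : (m : ℝ) ≤ (2 + r : ℕ) := by exact_mod_cast hr.trans (Nat.le_add_left r 2)
  rw [div_le_iff₀ hδ] at hm
  nlinarith

lemma eventually_gammaVal_le_mul_add_mul {K₁ K₂ : V → V → ℝ} (hK₁ : IsKernel K₁)
    (hK₂ : IsKernel K₂) (hcop₁ : IsCopositiveKernel K₁) {δ : ℝ} (hδ : 0 < δ)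
    (hcop₂ : IsCopositiveKernel fun u v => K₂ u v - δ) {l₁ l₂ : ℝ}
    (hdiag₁ : ∀ v, K₁ v v = l₁ - 1) (hdiag₂ : ∀ v, K₂ v v = l₂ - 1)
    (hoff₁ : ∀ u v, (u, v) ∉ E → K₁ u v = -1) (hoff₂ : ∀ u v, (u, v) ∉ E → K₂ u v = -1)
    {t : ℝ} (ht₀ : 0 < t) (ht₁ : t ≤ 1) :
    ∀ᶠ r in atTop, gammaVal V E r ≤ (((1 - t) * l₁ + t * l₂ : ℝ) : EReal) := by
  refine eventually_gammaVal_le (K := fun u v => (1 - t) * K₁ u v + t * K₂ u v)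
    ⟨by have := hK₁.1; have := hK₂.1; fun_prop, fun u v => by simp only [hK₁.2 u v, hK₂.2 u v]⟩
    (mul_pos ht₀ hδ) ?_ (fun v => by rw [hdiag₁, hdiag₂]; ring)
    fun u v huv => by rw [hoff₁ u v huv, hoff₂ u v huv]; ring
  convert hcop₁.mul_add_mul hcop₂ (sub_nonneg.2 ht₁) ht₀.le using 3
  ring

end GammaVal

/-- for a compact topological packing graph `G = (V, E)` whose
copositive program is strictly feasible, the sequence `(γ_r(G))_r` is
nonincreasing and converges to the stability number `α(G)`. -/
theorem stmt9 (n : ℕ) (V : Set (Fin n → ℝ)) (hVne : V.Nonempty)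
    (hVc : IsCompact V) (E : Set (↥V × ↥V))
    (hEsymm : ∀ u v : ↥V, (u, v) ∈ E → (v, u) ∈ E)
    (hpack : ∀ C : Set ↥V, C.Finite → (∀ x ∈ C, ∀ y ∈ C, x ≠ y → (x, y) ∈ E) →
      ∃ D : Set ↥V, IsOpen D ∧ (∀ x ∈ D, ∀ y ∈ D, x ≠ y → (x, y) ∈ E) ∧ C ⊆ D)
    (lam : ℝ) (Kp : KernelSpace V) (hKint : Kp ∈ interior (COPSet V))
    (hKdiag : ∀ v : ↥V, Kp.1 (v, v) = lam - 1)
    (hKoff : ∀ u v : ↥V, (u, v) ∉ E → Kp.1 (u, v) = -1) :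
    Antitone (fun r => gammaVal V E r) ∧
    Tendsto (fun r => gammaVal V E r) atTop
      (𝓝 ((stabilityNumber V E : ℝ) : EReal)) := by
  have : CompactSpace V := isCompact_iff_compactSpace.mp hVc
  have hrefl : ∀ u, (u, u) ∈ E :=
    IsCopositiveKernel.diag_mem (K := fun u v => Kp.1 (u, v)) (interior_subset hKint) hKoff
  have hE : IsOpen E := isOpen_of_forall_finite_pairwise hEsymm hrefl hpack
  obtain ⟨⟨S, hS, hSα⟩, hα⟩ := isGreatest_stabilityNumber hE hrefl
  have hSne : S.Nonempty := by
    obtain ⟨x, hx⟩ := hVne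
    exact Finset.card_pos.1 (hSα ▸ hα ⟨{⟨x, hx⟩}, by simp, rfl⟩)
  obtain ⟨Ks, hKs, hKscop, hKsdiag, hKsoff⟩ :=
    exists_isCopositiveKernel_of_isOpen hE hEsymm hrefl fun s hs => hα ⟨s, hs, rfl⟩
  obtain ⟨δ, hδ, hKpδ⟩ := exists_pos_isCopositiveKernel_sub hKint
  refine ⟨gammaVal_antitone, tendsto_order.2 ⟨fun b hb => .of_forall fun r =>
    hb.trans_le (hSα ▸ card_le_gammaVal hS hSne r), fun b hb => ?_⟩⟩
  obtain ⟨c, hαc, hcb⟩ := EReal.lt_iff_exists_real_btwn.1 hb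
  have hlim : Tendsto (fun t : ℝ => (1 - t) * stabilityNumber V E + t * lam) (𝓝[>] 0)
      (𝓝 (stabilityNumber V E)) :=
    ((by fun_prop : Continuous fun t : ℝ => (1 - t) * stabilityNumber V E + t * lam).tendsto'
      0 _ (by simp)).mono_left nhdsWithin_le_nhds
  obtain ⟨t, htc, ht₀, ht₁⟩ := ((hlim.eventually (gt_mem_nhds (EReal.coe_lt_coe_iff.1 hαc))).and
    (Ioc_mem_nhdsGT one_pos)).exists
  filter_upwards [eventually_gammaVal_le_mul_add_mul hKs ⟨Kp.1.continuous, fun u v => Kp.2 u v⟩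
    hKscop hδ hKpδ hKsdiag hKdiag hKsoff hKoff ht₀ ht₁] with r hr
  exact hr.trans_lt ((EReal.coe_lt_coe_iff.2 htc).trans hcb)
end
end
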